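/- arXiv:1404.2594 — 3 statements merged into one kernel-verified Lean document; each statement's English description precedes it below -/
import Mathlib

section
/- Let (W,S) be a Coxeter system acting on ℝⁿ via the Tits representation, with Tits cone U = ⋃_{w∈W} w·C̄₀ (the orbit of the closed fundamental chamber). Then U is a convex cone with vertex 0. -/
/-!
Following Tits, a point `x` lies in `⋃ w, w • C̄₀` exactly when only finitely many positive roots
`β` satisfy `B(x, β) < 0`. Indeed, if `B(x, α_s) < 0`, the reflection `s` removes `α_s` from this
set and maps the remaining positive roots to positive roots, so induction on its size moves `x`
into `C̄₀`. This finiteness condition is visibly stable under non-negative combinations.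
The input is Tits' theorem that every root is non-negative or non-positive, which reduces to
dihedral subgroups, where the coordinates of roots are the values `sin (k π / m) / sin (π / m)`.
Finally `C̄₀ = {x | ∀ s, 0 ≤ B(x, α_s)}` unless `C₀`, and hence `U`, is empty.
-/

/-- The coefficients `k(s,t) = -cos(π / m(s,t))` of the bilinear form associated to a Coxeter
matrix, with the convention `k(s,t) = -1` when `m(s,t) = ∞` (encoded by `M s t = 0`). -/
noncomputable def coxCoeff {B : Type*} (M : CoxeterMatrix B) (s t : B) : ℝ :=
  if M s t = 0 then -1 else -Real.cos (Real.pi / (M s t))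

/-- The canonical symmetric bilinear form of a Coxeter matrix on `ℝ^S`, with
`B(α_s, α_t) = -cos(π / m(s,t))` on the standard basis vectors `α_s`. -/
noncomputable def coxForm {B : Type*} [Fintype B] (M : CoxeterMatrix B) (x y : B → ℝ) : ℝ :=
  ∑ s, ∑ t, x s * y t * coxCoeff M s t

/-- The simple root `α_s`, a standard basis vector of `ℝ^S`. -/
noncomputable def simpleRoot {B : Type*} [DecidableEq B] (s : B) : B → ℝ := Pi.single s 1

/-- The open fundamental chamber `C₀ = {x : B(x, α_s) > 0 for all s}` of the Tits
representation. -/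
noncomputable def fundamentalChamber {B : Type*} [Fintype B] [DecidableEq B]
    (M : CoxeterMatrix B) : Set (B → ℝ) :=
  {x | ∀ s, 0 < coxForm M x (simpleRoot s)}

/-- The Tits cone `U = ⋃_{w ∈ W} w · C̄₀` associated to a representation `ρ` of `W` on `ℝ^S`. -/
noncomputable def titsCone {B W : Type*} [Fintype B] [DecidableEq B] [Group W]
    (M : CoxeterMatrix B) (ρ : W →* ((B → ℝ) ≃ₗ[ℝ] (B → ℝ))) : Set (B → ℝ) :=
  ⋃ w : W, (ρ w) '' (closure (fundamentalChamber M))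

/-- The assertion that `ρ` is the Tits (geometric) representation of the Coxeter system `cs`:
each simple reflection `s` acts by `x ↦ x - 2 B(x, α_s) α_s`. -/
def IsTitsRepresentation {B W : Type*} [Fintype B] [DecidableEq B] [Group W]
    (M : CoxeterMatrix B) (cs : CoxeterSystem M W)
    (ρ : W →* ((B → ℝ) ≃ₗ[ℝ] (B → ℝ))) : Prop :=
  ∀ (s : B) (x : B → ℝ),
    ρ (cs.simple s) x = x - (2 * coxForm M x (simpleRoot s)) • simpleRoot s

section CoxeterForm

variable {B : Type*} (M : CoxeterMatrix B)

lemma coxCoeff_symm (s t : B) : coxCoeff M s t = coxCoeff M t s := by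
  rw [coxCoeff, coxCoeff, M.symmetric]

lemma coxCoeff_self (s : B) : coxCoeff M s s = 1 := by
  simp [coxCoeff]

variable [Fintype B]

lemma coxForm_add_left (x y z : B → ℝ) :
    coxForm M (x + y) z = coxForm M x z + coxForm M y z := by
  simp only [coxForm, Pi.add_apply, add_mul, Finset.sum_add_distrib]

lemma coxForm_sub_left (x y z : B → ℝ) :
    coxForm M (x - y) z = coxForm M x z - coxForm M y z := by
  simp only [coxForm, Pi.sub_apply, sub_mul, Finset.sum_sub_distrib]

lemma coxForm_smul_left (c : ℝ) (x y : B → ℝ) :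
    coxForm M (c • x) y = c * coxForm M x y := by
  simp only [coxForm, Pi.smul_apply, smul_eq_mul, Finset.mul_sum, mul_assoc]

lemma coxForm_symm (x y : B → ℝ) : coxForm M x y = coxForm M y x := by
  rw [coxForm, coxForm, Finset.sum_comm]
  refine Finset.sum_congr rfl fun t _ => Finset.sum_congr rfl fun s _ => ?_
  rw [coxCoeff_symm]
  ring

lemma coxForm_sub_right (x y z : B → ℝ) :
    coxForm M x (y - z) = coxForm M x y - coxForm M x z := by
  rw [coxForm_symm, coxForm_sub_left, coxForm_symm M y, coxForm_symm M z]

lemma coxForm_smul_right (c : ℝ) (x y : B → ℝ) :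
    coxForm M x (c • y) = c * coxForm M x y := by
  rw [coxForm_symm, coxForm_smul_left, coxForm_symm M y]

lemma continuous_coxForm_left (y : B → ℝ) : Continuous fun x => coxForm M x y := by
  unfold coxForm
  fun_prop

variable [DecidableEq B]

lemma coxForm_simpleRoot_right (x : B → ℝ) (t : B) :
    coxForm M x (simpleRoot t) = ∑ s, x s * coxCoeff M s t := by
  refine Finset.sum_congr rfl fun s _ => ?_
  simp [simpleRoot, Pi.single_apply]

lemma coxForm_simpleRoot_simpleRoot (s t : B) :
    coxForm M (simpleRoot s) (simpleRoot t) = coxCoeff M s t := by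
  rw [coxForm_simpleRoot_right]
  simp [simpleRoot, Pi.single_apply]

lemma coxForm_eq_sum_mul_coxForm_simpleRoot (x y : B → ℝ) :
    coxForm M x y = ∑ t, y t * coxForm M x (simpleRoot t) := by
  rw [coxForm, Finset.sum_comm]
  refine Finset.sum_congr rfl fun t _ => ?_
  rw [coxForm_simpleRoot_right, Finset.mul_sum]
  refine Finset.sum_congr rfl fun s _ => ?_
  ring

end CoxeterForm

section Chamber

variable {B : Type*} [Fintype B] [DecidableEq B] (M : CoxeterMatrix B)

def closedChamber : Set (B → ℝ) := {x | ∀ s, 0 ≤ coxForm M x (simpleRoot s)}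

lemma isClosed_closedChamber : IsClosed (closedChamber M) := by
  simp only [closedChamber, Set.ofPred_forall]
  exact isClosed_iInter fun s => isClosed_le continuous_const (continuous_coxForm_left M _)

lemma coxForm_nonneg_of_mem_closedChamber {x y : B → ℝ} (hx : x ∈ closedChamber M)
    (hy : 0 ≤ y) : 0 ≤ coxForm M x y := by
  rw [coxForm_eq_sum_mul_coxForm_simpleRoot]
  exact Finset.sum_nonneg fun t _ => mul_nonneg (hy t) (hx t)

lemma openSegment_subset_fundamentalChamber {x y : B → ℝ} (hx : x ∈ closedChamber M)
    (hy : y ∈ fundamentalChamber M) : openSegment ℝ x y ⊆ fundamentalChamber M := by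
  rintro _ ⟨a, b, ha, hb, -, rfl⟩ s
  rw [coxForm_add_left, coxForm_smul_left, coxForm_smul_left]
  exact add_pos_of_nonneg_of_pos (mul_nonneg ha.le (hx s)) (mul_pos hb (hy s))

lemma closure_fundamentalChamber (h : (fundamentalChamber M).Nonempty) :
    closure (fundamentalChamber M) = closedChamber M := by
  refine subset_antisymm
    (closure_minimal (fun x hx s => (hx s).le) (isClosed_closedChamber M)) fun x hx => ?_
  obtain ⟨y, hy⟩ := h
  exact closure_mono (openSegment_subset_fundamentalChamber M hx hy)
    (segment_subset_closure_openSegment (left_mem_segment ℝ x y))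

end Chamber

section DihedralCoeff

open Polynomial.Chebyshev

variable {B : Type*} (M : CoxeterMatrix B)

/-- `U_{k-1}(cos (π / m)) = sin (k π / m) / sin (π / m)`, which is `k` when `m = ∞`. -/
noncomputable def dihedralCoeff (s t : B) (k : ℕ) : ℝ :=
  (U ℝ ((k : ℤ) - 1)).eval (-coxCoeff M s t)

lemma dihedralCoeff_zero (s t : B) : dihedralCoeff M s t 0 = 0 := by
  simp [dihedralCoeff]

lemma dihedralCoeff_one (s t : B) : dihedralCoeff M s t 1 = 1 := by
  simp [dihedralCoeff]

lemma dihedralCoeff_add_two (s t : B) (k : ℕ) :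
    dihedralCoeff M s t (k + 2) =
      -2 * coxCoeff M s t * dihedralCoeff M s t (k + 1) - dihedralCoeff M s t k := by
  have h := U_add_two ℝ ((k : ℤ) - 1)
  simp only [dihedralCoeff, Nat.cast_add, Nat.cast_ofNat, Nat.cast_one]
  rw [show (k : ℤ) + 2 - 1 = (k : ℤ) - 1 + 2 by ring,
    show (k : ℤ) + 1 - 1 = (k : ℤ) - 1 + 1 by ring, h]
  simp only [Polynomial.eval_sub, Polynomial.eval_mul, Polynomial.eval_ofNat, Polynomial.eval_X]
  ring

lemma dihedralCoeff_nonneg {s t : B} (hst : s ≠ t) {k : ℕ} (hk : M s t = 0 ∨ k ≤ M s t) :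
    0 ≤ dihedralCoeff M s t k := by
  by_cases hm : M s t = 0
  · simp [dihedralCoeff, coxCoeff, hm, U_eval_one]
  have hm2 : (2 : ℝ) ≤ M s t := by
    have := M.off_diagonal s t hst
    exact_mod_cast (by omega : 2 ≤ M s t)
  have hkm : (k : ℝ) ≤ M s t := by exact_mod_cast hk.resolve_left hm
  set θ := Real.pi / M s t
  have hθ : 0 < θ := by positivity
  have hkθ : k * θ ≤ Real.pi := by
    rw [mul_div_assoc']
    exact div_le_of_le_mul₀ (by positivity) Real.pi_pos.le (by nlinarith [Real.pi_pos])
  have hsin : 0 < Real.sin θ :=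
    Real.sin_pos_of_pos_of_lt_pi hθ (div_lt_self Real.pi_pos (by linarith))
  refine nonneg_of_mul_nonneg_left ?_ hsin
  rw [dihedralCoeff, coxCoeff, if_neg hm, neg_neg, U_real_cos]
  push_cast
  rw [sub_add_cancel]
  exact Real.sin_nonneg_of_nonneg_of_le_pi (by positivity) hkθ

end DihedralCoeff

section TitsRepresentation

open CoxeterSystem

variable {B W : Type*} [Fintype B] [DecidableEq B] [Group W] {M : CoxeterMatrix B}
  {cs : CoxeterSystem M W} {ρ : W →* ((B → ℝ) ≃ₗ[ℝ] (B → ℝ))}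

omit [Fintype B] [DecidableEq B] in
lemma rep_mul_apply (a b : W) (x : B → ℝ) : ρ (a * b) x = ρ a (ρ b x) := by
  rw [map_mul, LinearEquiv.mul_apply]

omit [Fintype B] [DecidableEq B] in
lemma rep_simple_rep_simple (s : B) (x : B → ℝ) :
    ρ (cs.simple s) (ρ (cs.simple s) x) = x := by
  rw [← rep_mul_apply, cs.simple_mul_simple_self, map_one, LinearEquiv.coe_one, id]

variable (hρ : IsTitsRepresentation M cs ρ)
include hρ

lemma rep_simple_simpleRoot (s t : B) :
    ρ (cs.simple s) (simpleRoot t) = simpleRoot t - (2 * coxCoeff M t s) • simpleRoot s := by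
  rw [hρ, coxForm_simpleRoot_simpleRoot]

lemma rep_simple_apply_of_ne {s r : B} (hrs : r ≠ s) (x : B → ℝ) :
    ρ (cs.simple s) x r = x r := by
  rw [hρ]
  simp [simpleRoot, hrs]

lemma coxForm_rep_simple_simpleRoot (s : B) (x : B → ℝ) :
    coxForm M (ρ (cs.simple s) x) (simpleRoot s) = -coxForm M x (simpleRoot s) := by
  rw [hρ, coxForm_sub_left, coxForm_smul_left, coxForm_simpleRoot_simpleRoot, coxCoeff_self]
  ring

lemma coxForm_rep_simple (s : B) (x y : B → ℝ) :
    coxForm M (ρ (cs.simple s) x) (ρ (cs.simple s) y) = coxForm M x y := by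
  rw [hρ, hρ, coxForm_sub_left, coxForm_sub_right, coxForm_sub_right, coxForm_smul_left,
    coxForm_smul_right, coxForm_smul_right, coxForm_smul_left, coxForm_simpleRoot_simpleRoot,
    coxCoeff_self, coxForm_symm M (simpleRoot s) y]
  ring

lemma coxForm_rep (w : W) (x y : B → ℝ) : coxForm M (ρ w x) (ρ w y) = coxForm M x y := by
  induction w using cs.simple_induction_left with
  | one => simp
  | mul_simple_left w s ih => rw [rep_mul_apply, rep_mul_apply, coxForm_rep_simple hρ, ih]

lemma rep_alternatingWord_simpleRoot (s t : B) (q : ℕ) :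
    ρ (cs.wordProd (alternatingWord s t q)) (simpleRoot s) =
      if Even q then
        dihedralCoeff M s t (q + 1) • simpleRoot s + dihedralCoeff M s t q • simpleRoot t
      else
        dihedralCoeff M s t q • simpleRoot s + dihedralCoeff M s t (q + 1) • simpleRoot t := by
  induction q with
  | zero => simp [alternatingWord, dihedralCoeff_zero, dihedralCoeff_one]
  | succ q ih =>
    rw [alternatingWord_succ', cs.wordProd_cons, rep_mul_apply, ih]
    rcases Nat.even_or_odd q with hq | hq
    · simp only [hq, Nat.even_add_one, if_true, not_true_eq_false, if_false, map_add, map_smul,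
        rep_simple_simpleRoot hρ, coxCoeff_self, dihedralCoeff_add_two]
      module
    · simp only [Nat.not_even_iff_odd.mpr hq, Nat.even_add_one, if_true, not_false_eq_true,
        if_false, map_add, map_smul, rep_simple_simpleRoot hρ, coxCoeff_self,
        coxCoeff_symm M t s, dihedralCoeff_add_two]
      module

lemma exists_nonneg_rep_alternatingWord_simpleRoot {s t : B} (hst : s ≠ t) {q : ℕ}
    (hq : M s t = 0 ∨ q < M s t) :
    ∃ a b : ℝ, 0 ≤ a ∧ 0 ≤ b ∧ ρ (cs.wordProd (alternatingWord s t q)) (simpleRoot s) =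
      a • simpleRoot s + b • simpleRoot t := by
  have h₀ := dihedralCoeff_nonneg M hst (k := q) (by omega)
  have h₁ := dihedralCoeff_nonneg M hst (k := q + 1) (by omega)
  rw [rep_alternatingWord_simpleRoot hρ]
  split_ifs
  exacts [⟨_, _, h₁, h₀, rfl⟩, ⟨_, _, h₀, h₁, rfl⟩]

end TitsRepresentation

namespace CoxeterSystem

variable {B W : Type*} [Group W] {M : CoxeterMatrix B} (cs : CoxeterSystem M W)

lemma isReduced_of_length_add_le {u : W} {ω : List B}
    (h : cs.length u + ω.length ≤ cs.length (u * cs.wordProd ω)) : cs.IsReduced ω := by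
  have := cs.length_mul_le u (cs.wordProd ω)
  have := cs.length_wordProd_le ω
  unfold IsReduced
  omega

lemma exists_eq_mul_alternatingWord {w : W} {t : B} (ht : cs.IsRightDescent w t) (s : B) :
    ∃ u q, w = u * cs.wordProd (alternatingWord s t q) ∧ cs.length w = cs.length u + q ∧
      0 < q ∧ ¬cs.IsRightDescent u s ∧ ¬cs.IsRightDescent u t := by
  induction hn : cs.length w using Nat.strong_induction_on generalizing w s t with
  | _ n ih =>
  set w' := w * cs.simple t
  have hw'len : cs.length w' + 1 = cs.length w := cs.isRightDescent_iff.mp ht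
  have hw' : w' * cs.simple t = w := cs.simple_mul_simple_cancel_right t
  have hw't : ¬cs.IsRightDescent w' t := by
    rw [IsRightDescent, hw']
    omega
  by_cases hs : cs.IsRightDescent w' s
  · obtain ⟨u, q, hu, hlen, hq, hut, hus⟩ := ih _ (by omega) hs t rfl
    refine ⟨u, q + 1, ?_, by omega, by omega, hus, hut⟩
    rw [← hw', hu, alternatingWord_succ, cs.wordProd_concat, mul_assoc]
  · refine ⟨w', 1, ?_, by omega, one_pos, hs, hw't⟩
    simp [alternatingWord, hw']

/-- `w s = u · π (alternatingWord t s (q + 1))` is then a reduced factorization, and a reduced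
alternating word has at most `m(s, t)` letters. -/
lemma eq_zero_or_lt_of_not_isRightDescent {u w : W} {s t : B} {q : ℕ}
    (hw : w = u * cs.wordProd (alternatingWord s t q)) (hlen : cs.length w = cs.length u + q)
    (hs : ¬cs.IsRightDescent w s) : M s t = 0 ∨ q < M s t := by
  have hws : w * cs.simple s = u * cs.wordProd (alternatingWord t s (q + 1)) := by
    rw [hw, alternatingWord_succ, cs.wordProd_concat, mul_assoc]
  have hred : cs.IsReduced (alternatingWord t s (q + 1)) := by
    apply cs.isReduced_of_length_add_le (u := u)
    rw [← hws, cs.not_isRightDescent_iff.mp hs, length_alternatingWord]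
    omega
  by_contra! h
  rw [M.symmetric] at h
  exact cs.not_isReduced_alternatingWord t s h.1 (by omega) hred

end CoxeterSystem

section Roots

open CoxeterSystem

variable {B W : Type*} [Fintype B] [DecidableEq B] [Group W] {M : CoxeterMatrix B}
  {cs : CoxeterSystem M W} {ρ : W →* ((B → ℝ) ≃ₗ[ℝ] (B → ℝ))}

omit [Fintype B] in
lemma simpleRoot_nonneg (s : B) : 0 ≤ simpleRoot s := Pi.single_nonneg.mpr zero_le_one

theorem rep_simpleRoot_nonneg (hρ : IsTitsRepresentation M cs ρ) {w : W} {s : B}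
    (hs : ¬cs.IsRightDescent w s) : 0 ≤ ρ w (simpleRoot s) := by
  induction hn : cs.length w using Nat.strong_induction_on generalizing w s with
  | _ n ih =>
  rcases eq_or_ne w 1 with rfl | hw
  · simpa using simpleRoot_nonneg s
  obtain ⟨t, ht⟩ := cs.exists_rightDescent_of_ne_one hw
  have hst : s ≠ t := by
    rintro rfl
    exact hs ht
  obtain ⟨u, q, rfl, hlen, hq, hus, hut⟩ := cs.exists_eq_mul_alternatingWord ht s
  obtain ⟨a, b, ha, hb, hab⟩ := exists_nonneg_rep_alternatingWord_simpleRoot hρ hst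
    (cs.eq_zero_or_lt_of_not_isRightDescent rfl hlen hs)
  rw [rep_mul_apply, hab, map_add, map_smul, map_smul]
  exact add_nonneg (smul_nonneg ha (ih _ (by omega) hus rfl))
    (smul_nonneg hb (ih _ (by omega) hut rfl))

def titsRoots (ρ : W →* ((B → ℝ) ≃ₗ[ℝ] (B → ℝ))) : Set (B → ℝ) :=
  {v | ∃ w s, ρ w (simpleRoot s) = v}

omit [Fintype B] in
lemma simpleRoot_mem_titsRoots (s : B) : simpleRoot s ∈ titsRoots ρ := ⟨1, s, by simp⟩

omit [Fintype B] in
lemma rep_mem_titsRoots (w : W) {v : B → ℝ} (hv : v ∈ titsRoots ρ) : ρ w v ∈ titsRoots ρ := by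
  obtain ⟨w', s, rfl⟩ := hv
  exact ⟨w * w', s, rep_mul_apply w w' _⟩

variable (hρ : IsTitsRepresentation M cs ρ)
include hρ

lemma nonneg_or_nonpos_of_mem_titsRoots {v : B → ℝ} (hv : v ∈ titsRoots ρ) : 0 ≤ v ∨ v ≤ 0 := by
  obtain ⟨w, s, rfl⟩ := hv
  by_cases hs : cs.IsRightDescent w s
  · right
    have hw : ρ w (simpleRoot s) = -ρ (w * cs.simple s) (simpleRoot s) := by
      rw [rep_mul_apply, rep_simple_simpleRoot hρ, coxCoeff_self, ← map_neg]
      congr 1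
      module
    rw [hw, neg_nonpos]
    exact rep_simpleRoot_nonneg hρ (cs.isRightDescent_iff_not_isRightDescent_mul.mp hs)
  · exact Or.inl (rep_simpleRoot_nonneg hρ hs)

lemma coxForm_self_of_mem_titsRoots {v : B → ℝ} (hv : v ∈ titsRoots ρ) : coxForm M v v = 1 := by
  obtain ⟨w, s, rfl⟩ := hv
  rw [coxForm_rep hρ, coxForm_simpleRoot_simpleRoot, coxCoeff_self]

/-- A nonnegative root supported on `s` is a multiple of `α_s` of `B`-norm `1`, hence `α_s`. -/
lemma exists_pos_apply_of_mem_titsRoots {v : B → ℝ} (hv : v ∈ titsRoots ρ) (hv₀ : 0 ≤ v)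
    {s : B} (hne : v ≠ simpleRoot s) : ∃ r, r ≠ s ∧ 0 < v r := by
  by_contra! h
  have hvs : v = v s • simpleRoot s := by
    ext r
    rcases eq_or_ne r s with rfl | hrs
    · simp [simpleRoot]
    · simp [simpleRoot, hrs, le_antisymm (h r hrs) (hv₀ r)]
  have hsq : v s * v s = 1 := by
    have := coxForm_self_of_mem_titsRoots hρ hv
    rwa [hvs, coxForm_smul_left, coxForm_smul_right, coxForm_simpleRoot_simpleRoot,
      coxCoeff_self, mul_one] at this
  have h0 : 0 ≤ v s := hv₀ s
  have h1 : v s = 1 := by nlinarith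
  exact hne (by rw [hvs, h1, one_smul])

lemma rep_simple_nonneg_of_mem_titsRoots {v : B → ℝ} (hv : v ∈ titsRoots ρ) (hv₀ : 0 ≤ v)
    {s : B} (hne : v ≠ simpleRoot s) : 0 ≤ ρ (cs.simple s) v := by
  obtain ⟨r, hrs, hr⟩ := exists_pos_apply_of_mem_titsRoots hρ hv hv₀ hne
  refine (nonneg_or_nonpos_of_mem_titsRoots hρ (rep_mem_titsRoots _ hv)).resolve_right
    fun h => ?_
  have := h r
  rw [Pi.zero_apply, rep_simple_apply_of_ne hρ hrs] at this
  linarith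

end Roots

section SeparatingRoots

open CoxeterSystem

variable {B W : Type*} [Fintype B] [DecidableEq B] [Group W] {M : CoxeterMatrix B}
  {cs : CoxeterSystem M W} {ρ : W →* ((B → ℝ) ≃ₗ[ℝ] (B → ℝ))}

def separatingRoots (M : CoxeterMatrix B) (ρ : W →* ((B → ℝ) ≃ₗ[ℝ] (B → ℝ))) (x : B → ℝ) :
    Set (B → ℝ) :=
  {v | v ∈ titsRoots ρ ∧ 0 ≤ v ∧ coxForm M x v < 0}

lemma separatingRoots_eq_empty {x : B → ℝ} (hx : x ∈ closedChamber M) :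
    separatingRoots M ρ x = ∅ :=
  Set.eq_empty_of_forall_notMem fun _ ⟨_, hv₀, hv⟩ =>
    hv.not_ge (coxForm_nonneg_of_mem_closedChamber M hx hv₀)

lemma separatingRoots_add_subset {a b : ℝ} (ha : 0 ≤ a) (hb : 0 ≤ b) (x y : B → ℝ) :
    separatingRoots M ρ (a • x + b • y) ⊆ separatingRoots M ρ x ∪ separatingRoots M ρ y := by
  rintro v ⟨hv, hv₀, hxy⟩
  rw [coxForm_add_left, coxForm_smul_left, coxForm_smul_left] at hxy
  rcases lt_or_ge (coxForm M x v) 0 with hx | hx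
  · exact Or.inl ⟨hv, hv₀, hx⟩
  rcases lt_or_ge (coxForm M y v) 0 with hy | hy
  · exact Or.inr ⟨hv, hv₀, hy⟩
  exact absurd hxy (add_nonneg (mul_nonneg ha hx) (mul_nonneg hb hy)).not_gt

variable (hρ : IsTitsRepresentation M cs ρ)
include hρ

lemma rep_simple_mem_separatingRoots {s : B} {x v : B → ℝ}
    (hv : v ∈ separatingRoots M ρ (ρ (cs.simple s) x)) (hne : v ≠ simpleRoot s) :
    ρ (cs.simple s) v ∈ separatingRoots M ρ x := by
  obtain ⟨hv, hv₀, hxv⟩ := hv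
  refine ⟨rep_mem_titsRoots _ hv, rep_simple_nonneg_of_mem_titsRoots hρ hv hv₀ hne, ?_⟩
  rwa [← coxForm_rep_simple hρ s, rep_simple_rep_simple]

lemma separatingRoots_rep_simple_subset (s : B) (x : B → ℝ) :
    separatingRoots M ρ (ρ (cs.simple s) x) ⊆
      insert (simpleRoot s) (ρ (cs.simple s) '' separatingRoots M ρ x) := by
  intro v hv
  by_cases hne : v = simpleRoot s
  · exact Or.inl hne
  · exact Or.inr ⟨_, rep_simple_mem_separatingRoots hρ hv hne, rep_simple_rep_simple s v⟩

lemma finite_separatingRoots_rep {x : B → ℝ} (hx : x ∈ closedChamber M) (w : W) :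
    (separatingRoots M ρ (ρ w x)).Finite := by
  induction w using cs.simple_induction_left with
  | one => simp [separatingRoots_eq_empty hx]
  | mul_simple_left w s ih =>
    rw [rep_mul_apply]
    exact ((ih.image _).insert _).subset (separatingRoots_rep_simple_subset hρ s _)

lemma separatingRoots_rep_simple_ssubset {s : B} {x : B → ℝ}
    (hs : coxForm M x (simpleRoot s) < 0) :
    separatingRoots M ρ (ρ (cs.simple s) x) ⊂ ρ (cs.simple s) '' separatingRoots M ρ x := by
  have hsub : separatingRoots M ρ (ρ (cs.simple s) x) ⊆
      ρ (cs.simple s) '' separatingRoots M ρ x := by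
    intro v hv
    refine (separatingRoots_rep_simple_subset hρ s x hv).resolve_left ?_
    rintro rfl
    have := hv.2.2
    rw [coxForm_rep_simple_simpleRoot hρ] at this
    linarith
  refine (Set.ssubset_iff_of_subset hsub).mpr
    ⟨_, ⟨_, ⟨simpleRoot_mem_titsRoots s, simpleRoot_nonneg s, hs⟩, rfl⟩, fun h => ?_⟩
  have := h.2.1 s
  rw [rep_simple_simpleRoot hρ, coxCoeff_self] at this
  simp [simpleRoot] at this

lemma mem_iUnion_image_closedChamber_of_finite {x : B → ℝ}
    (hfin : (separatingRoots M ρ x).Finite) : x ∈ ⋃ w, ρ w '' closedChamber M := by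
  induction hn : (separatingRoots M ρ x).ncard using Nat.strong_induction_on generalizing x with
  | _ n ih =>
  by_cases hx : x ∈ closedChamber M
  · exact Set.mem_iUnion.mpr ⟨1, x, hx, by simp⟩
  obtain ⟨s, hs⟩ : ∃ s, coxForm M x (simpleRoot s) < 0 := by
    simpa [closedChamber] using hx
  have hssub := separatingRoots_rep_simple_ssubset hρ hs
  have hlt : (separatingRoots M ρ (ρ (cs.simple s) x)).ncard < n :=
    hn ▸ (Set.ncard_lt_ncard hssub (hfin.image _)).trans_eq
      (Set.ncard_image_of_injective _ (ρ (cs.simple s)).injective)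
  obtain ⟨w, d, hd, hwd⟩ :=
    Set.mem_iUnion.mp <| ih _ hlt ((hfin.image _).subset hssub.subset) rfl
  exact Set.mem_iUnion.mpr
    ⟨cs.simple s * w, d, hd, by rw [rep_mul_apply, hwd, rep_simple_rep_simple]⟩

theorem mem_iUnion_image_closedChamber_iff {x : B → ℝ} :
    x ∈ ⋃ w, ρ w '' closedChamber M ↔ (separatingRoots M ρ x).Finite := by
  refine ⟨fun hx => ?_, mem_iUnion_image_closedChamber_of_finite hρ⟩
  obtain ⟨w, d, hd, rfl⟩ := Set.mem_iUnion.mp hx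
  exact finite_separatingRoots_rep hρ hd w

end SeparatingRoots

/-- Let `(W, S)` be a Coxeter system acting on `ℝⁿ` (`n = |S|`) via the Tits representation,
with Tits cone `U = ⋃_{w ∈ W} w · C̄₀`, the orbit of the closed fundamental chamber.  Then `U`
is a convex cone with vertex `0`: it is convex and closed under multiplication by non-negative
scalars. -/
theorem titsCone_convex_cone {B W : Type*} [Fintype B] [DecidableEq B] [Group W]
    (M : CoxeterMatrix B) (cs : CoxeterSystem M W)
    (ρ : W →* ((B → ℝ) ≃ₗ[ℝ] (B → ℝ))) (hρ : IsTitsRepresentation M cs ρ) :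
    Convex ℝ (titsCone M ρ) ∧
      ∀ c : ℝ, 0 ≤ c → ∀ x ∈ titsCone M ρ, c • x ∈ titsCone M ρ := by
  by_cases hC : (fundamentalChamber M).Nonempty
  · have hU : titsCone M ρ = {x | (separatingRoots M ρ x).Finite} := by
      ext x
      rw [titsCone, closure_fundamentalChamber M hC, mem_iUnion_image_closedChamber_iff hρ]
      rfl
    rw [hU]
    refine ⟨fun x hx y hy a b ha hb _ => ?_, fun c hc x hx => ?_⟩
    · exact (hx.union hy).subset (separatingRoots_add_subset ha hb x y)
    · exact hx.subset (by simpa using separatingRoots_add_subset (M := M) (ρ := ρ) hc le_rfl x x)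
  · have hU : titsCone M ρ = ∅ := by
      simp [titsCone, Set.not_nonempty_iff_eq_empty.mp hC]
    simp [hU, convex_empty]
end

section
/- Let (W,S) be a Coxeter system and I ⊆ J ⊆ S with W_J finite. In the group algebra ℤ[G_W] of the Artin group, define T^J_I := Σ_{β ∈ W^J_I} (−1)^{ℓ(β)} g_β, where g_β = ψ(β) is the image of β under the canonical section. Under the ring map ℤ[G_W] → ℤ[q,q^{−1}] sending each g_s to −q, the element T^J_I maps to W_J(q)/W_I(q), the quotient of Poincaré polynomials, evaluated in ℤ[q,q^{-1}]. -/
/-- The product in the free group of the generators indexed by a word. -/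
def wordToFreeGroup {B : Type*} (l : List B) : FreeGroup B := (l.map FreeGroup.of).prod

/-- The braid relations of the Artin group of a Coxeter matrix `M`: for each pair `s, t` with
`m(s,t) = M s t` finite, the relation `g_s g_t g_s ⋯ = g_t g_s g_t ⋯` (`M s t` factors on each
side).  (In a `CoxeterMatrix`, the value `0` encodes `m(s,t) = ∞`, in which case the word below
is empty and the relation is trivial.) -/
def artinRelationsSet {B : Type*} (M : CoxeterMatrix B) : Set (FreeGroup B) :=
  {r | ∃ s t : B, r = wordToFreeGroup (CoxeterSystem.alternatingWord s t (M s t)) *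
      (wordToFreeGroup (CoxeterSystem.alternatingWord t s (M s t)))⁻¹}

/-- The Artin group of a Coxeter matrix `M`: generators `g_s`, `s ∈ S`, and braid relations
`g_s g_t g_s ⋯ = g_t g_s g_t ⋯` (`m(s,t)` factors on each side) for `m(s,t) < ∞`. -/
abbrev ArtinGroup {B : Type*} (M : CoxeterMatrix B) := PresentedGroup (artinRelationsSet M)

/-- The standard generator `g_s` of the Artin group. -/
def artinGen {B : Type*} (M : CoxeterMatrix B) (s : B) : ArtinGroup M := PresentedGroup.of s

/-!
Every `w ∈ W_J` factors uniquely as `w = β u` with `u ∈ W_I` and `β ∈ W^J_I`, and then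
`ℓ(w) = ℓ(β) + ℓ(u)`; hence `W_J(q) = W_I(q) · Σ_{β ∈ W^J_I} q^{ℓ(β)}`. Since `ψ β` is a product of
`ℓ(β)` Artin generators, `φ` sends `(-1)^{ℓ(β)} g_β` to `(-1)^{ℓ(β)} (-q)^{ℓ(β)} = q^{ℓ(β)}`, so
`φ(T^J_I)` is exactly the second factor.

Additivity of length rests on the exchange property. That in turn comes from the permutation
representation of `W` on `W × {±1}` in which `s_i` acts by `(t, ε) ↦ (s_i t s_i, ±ε)`, the sign
flipping iff `t = s_i`: it shows that the parity of the number of occurrences of `t` in the right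
inversion sequence of a word depends only on the product of the word.
-/

open List

theorem List.even_count_of_getElem_add {α : Type*} [BEq α] (l : List α) (m : ℕ)
    (hl : l.length = 2 * m) (h : ∀ k (hk : k < m), l[k + m]'(by omega) = l[k]'(by omega))
    (a : α) : Even (l.count a) := by
  have hdrop : l.drop m = l.take m :=
    ext_getElem (by simp; omega) fun k h₁ h₂ => by
      simp only [getElem_drop, getElem_take, add_comm m k]
      exact h k (by simp at h₂; omega)
  rw [← take_append_drop m l, count_append, hdrop]
  exact ⟨_, rfl⟩

namespace CoxeterSystem

variable {B W : Type*} [Group W] {M : CoxeterMatrix B} (cs : CoxeterSystem M W)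

local prefix:100 "s " => cs.simple
local prefix:100 "π " => cs.wordProd
local prefix:100 "ℓ " => cs.length
local prefix:100 "ris " => cs.rightInvSeq
local prefix:100 "lis " => cs.leftInvSeq

theorem alternatingWord_two_mul_succ (i j : B) (m : ℕ) :
    alternatingWord i j (2 * (m + 1)) = i :: j :: alternatingWord i j (2 * m) := by
  rw [mul_add_one, alternatingWord_succ', alternatingWord_succ']
  simp

theorem reverse_alternatingWord_two_mul (i j : B) (m : ℕ) :
    (alternatingWord i j (2 * m)).reverse = alternatingWord j i (2 * m) := by
  induction m with
  | zero => rfl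
  | succ m ih =>
    rw [alternatingWord_two_mul_succ, reverse_cons, reverse_cons, ih, mul_add_one,
      alternatingWord_succ, alternatingWord_succ]
    simp

theorem prod_map_alternatingWord_two_mul {G : Type*} [Monoid G] (f : B → G) (i j : B) (m : ℕ) :
    ((alternatingWord i j (2 * m)).map f).prod = (f i * f j) ^ m := by
  induction m with
  | zero => simp [alternatingWord]
  | succ m ih => rw [alternatingWord_two_mul_succ, map_cons, map_cons, prod_cons, prod_cons, ih,
      pow_succ', mul_assoc]

section SignedConj

variable [DecidableEq W]

theorem even_count_rightInvSeq_alternatingWord (i j : B) (t : W) :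
    Even ((ris (alternatingWord i j (2 * M i j))).count t) := by
  rw [← reverse_alternatingWord_two_mul j i, rightInvSeq_reverse, count_reverse]
  refine (lis (alternatingWord j i (2 * M i j))).even_count_of_getElem_add (M i j) (by simp)
    (fun k hk => ?_) t
  rw [getElem_leftInvSeq_alternatingWord _ _ _ _ _ (by omega),
    getElem_leftInvSeq_alternatingWord _ _ _ _ _ (by omega),
    prod_alternatingWord_eq_mul_pow, prod_alternatingWord_eq_mul_pow,
    show (2 * (k + M i j) + 1) / 2 = k + M i j by omega, show (2 * k + 1) / 2 = k by omega]
  simp [pow_add]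

def signedConj (i : B) : Equiv.Perm (W × ℤˣ) :=
  Function.Involutive.toPerm (fun p => (s i * p.1 * s i, if p.1 = s i then -p.2 else p.2)) <| by
    rintro ⟨t, ε⟩
    by_cases h : t = s i <;> simp [h, mul_assoc, mul_eq_one_iff_eq_inv]

theorem signedConj_apply (i : B) (t : W) (ε : ℤˣ) :
    cs.signedConj i (t, ε) = (s i * t * s i, if t = s i then -ε else ε) :=
  rfl

theorem prod_map_signedConj_apply (ω : List B) (t : W) (ε : ℤˣ) :
    (ω.map cs.signedConj).prod (t, ε) =
      (π ω * t * (π ω)⁻¹, (-1) ^ (ris ω).count t * ε) := by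
  induction ω generalizing t ε with
  | nil => simp
  | cons i ω ih =>
    have hconj : π ω * t * (π ω)⁻¹ = s i ↔ (π ω)⁻¹ * s i * π ω = t := by
      constructor <;> intro h <;> rw [← h] <;> group
    rw [map_cons, prod_cons, Equiv.Perm.mul_apply, ih, signedConj_apply, if_congr hconj rfl rfl]
    simp only [rightInvSeq, count_cons, beq_iff_eq, wordProd_cons, mul_inv_rev, inv_simple]
    split_ifs <;> simp [pow_succ, mul_assoc]

theorem isLiftable_signedConj : M.IsLiftable cs.signedConj := by
  intro i j
  rw [← prod_map_alternatingWord_two_mul]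
  ext ⟨t, ε⟩ : 1
  rw [prod_map_signedConj_apply, (cs.even_count_rightInvSeq_alternatingWord i j t).neg_one_pow]
  simp [prod_alternatingWord_eq_mul_pow]

def signedConjHom : W →* Equiv.Perm (W × ℤˣ) := cs.lift ⟨cs.signedConj, cs.isLiftable_signedConj⟩

theorem signedConjHom_wordProd (ω : List B) :
    cs.signedConjHom (π ω) = (ω.map cs.signedConj).prod := by
  rw [wordProd, map_list_prod, map_map]
  congr 2
  funext i
  exact cs.lift_apply_simple _ i

theorem neg_one_pow_count_rightInvSeq_eq {ω ω' : List B} (h : π ω = π ω') (t : W) :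
    (-1 : ℤˣ) ^ (ris ω).count t = (-1) ^ (ris ω').count t := by
  have hprod : (ω.map cs.signedConj).prod = (ω'.map cs.signedConj).prod := by
    rw [← signedConjHom_wordProd, ← signedConjHom_wordProd, h]
  simpa [prod_map_signedConj_apply] using congr_arg (fun f => (f (t, 1)).2) hprod

end SignedConj

/-- `s i` occurs exactly once in the right inversion sequence of a reduced word for `π ω * s i`
followed by `i`, hence an odd number of times in that of `ω`. -/
theorem simple_mem_rightInvSeq_of_isRightDescent {ω : List B} {i : B}
    (hi : cs.IsRightDescent (π ω) i) : s i ∈ ris ω := by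
  classical
  by_contra hnot
  obtain ⟨ω', hω', hω'_prod⟩ := cs.exists_isReduced (π ω * s i)
  have hnot' : s i ∉ ris ω' := fun hmem => by
    have := (cs.isRightInversion_of_mem_rightInvSeq hω' hmem).2
    rw [← hω'_prod, mul_assoc, simple_mul_simple_self, mul_one] at this
    exact lt_asymm hi this
  have hparity := cs.neg_one_pow_count_rightInvSeq_eq (ω := ω) (ω' := ω'.concat i)
    (by rw [wordProd_concat, ← hω'_prod, mul_assoc, simple_mul_simple_self, mul_one]) (s i)
  rw [count_eq_zero_of_not_mem hnot, rightInvSeq_concat, concat_eq_append, count_append,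
    count_eq_zero_of_not_mem (by simpa [MulAut.conj, mul_eq_one_iff_inv_eq] using hnot')] at hparity
  simp at hparity

/-- The exchange property. -/
theorem exists_eraseIdx_of_isRightDescent {ω : List B} {i : B}
    (hi : cs.IsRightDescent (π ω) i) : ∃ j < ω.length, π ω * s i = π (ω.eraseIdx j) := by
  obtain ⟨j, hj, hget⟩ := getElem_of_mem (cs.simple_mem_rightInvSeq_of_isRightDescent hi)
  refine ⟨j, by simpa using hj, ?_⟩
  rw [← wordProd_mul_getD_rightInvSeq, getD_eq_getElem _ _ hj, hget]

theorem exists_eraseIdx_append_of_isRightDescent {α ι : List B} {i : B}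
    (hi : cs.IsRightDescent (π (α ++ ι)) i) :
    (∃ j < α.length, π (α ++ ι) * s i = π (α.eraseIdx j) * π ι) ∨
      ∃ j < ι.length, π (α ++ ι) * s i = π α * π (ι.eraseIdx j) := by
  obtain ⟨j, hj, he⟩ := cs.exists_eraseIdx_of_isRightDescent hi
  rw [length_append] at hj
  rcases lt_or_ge j α.length with hjα | hjα
  · exact .inl ⟨j, hjα, by rw [he, eraseIdx_append_of_lt_length hjα, wordProd_append]⟩
  · exact .inr ⟨j - α.length, by omega,
      by rw [he, eraseIdx_append_of_length_le hjα, wordProd_append]⟩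

theorem exists_isReduced_mul_simple {ω : List B} (hω : cs.IsReduced ω) (i : B) :
    ∃ ω' : List B, (∀ j ∈ ω', j ∈ ω ∨ j = i) ∧ cs.IsReduced ω' ∧ π ω' = π ω * s i := by
  by_cases hi : cs.IsRightDescent (π ω) i
  · obtain ⟨j, hj, he⟩ := cs.exists_eraseIdx_of_isRightDescent hi
    refine ⟨ω.eraseIdx j, fun k hk => .inl (mem_of_mem_eraseIdx hk), ?_, he.symm⟩
    rw [IsReduced, ← he, length_eraseIdx_of_lt hj, ← hω, ← cs.isRightDescent_iff.mp hi]
    rfl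
  · refine ⟨ω.concat i, fun k hk => by simpa using hk, ?_, wordProd_concat ..⟩
    rw [IsReduced, wordProd_concat, cs.not_isRightDescent_iff.mp hi, hω, length_concat]

def parabolicSubgroup (I : Set B) : Subgroup W := Subgroup.closure (cs.simple '' I)

def minCosetReps (I : Set B) : Set W := {β | ∀ i ∈ I, ℓ β < ℓ (β * s i)}

variable {I : Set B}

theorem simple_mem_parabolicSubgroup {i : B} (hi : i ∈ I) : s i ∈ cs.parabolicSubgroup I :=
  Subgroup.subset_closure ⟨i, hi, rfl⟩

theorem exists_isReduced_of_mem_parabolicSubgroup {w : W} (hw : w ∈ cs.parabolicSubgroup I) :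
    ∃ ω : List B, (∀ i ∈ ω, i ∈ I) ∧ cs.IsReduced ω ∧ π ω = w := by
  have step : ∀ w, (∃ ω : List B, (∀ i ∈ ω, i ∈ I) ∧ cs.IsReduced ω ∧ π ω = w) →
      ∀ i ∈ I, ∃ ω : List B, (∀ i ∈ ω, i ∈ I) ∧ cs.IsReduced ω ∧ π ω = w * s i := by
    rintro w ⟨ω, hωI, hω, rfl⟩ i hi
    obtain ⟨ω', hω'I, hω', he⟩ := cs.exists_isReduced_mul_simple hω i
    exact ⟨ω', fun j hj => (hω'I j hj).elim (hωI j) (· ▸ hi), hω', he⟩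
  induction hw using Subgroup.closure_induction_right with
  | one => exact ⟨[], by simp, by simp [IsReduced], rfl⟩
  | mul_right w _ _ hi ih =>
    obtain ⟨i, hi, rfl⟩ := hi
    exact step w ih i hi
  | mul_inv_cancel w _ _ hi ih =>
    obtain ⟨i, hi, rfl⟩ := hi
    rw [inv_simple]
    exact step w ih i hi

theorem exists_isRightDescent_of_mem_parabolicSubgroup {w : W}
    (hw : w ∈ cs.parabolicSubgroup I) (h1 : w ≠ 1) : ∃ i ∈ I, cs.IsRightDescent w i := by
  obtain ⟨ω, hωI, hω, rfl⟩ := cs.exists_isReduced_of_mem_parabolicSubgroup hw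
  rcases eq_nil_or_concat ω with rfl | ⟨ω₀, i, rfl⟩
  · exact absurd rfl h1
  refine ⟨i, hωI i (by simp), ?_⟩
  rw [IsRightDescent, hω, wordProd_concat, mul_assoc, simple_mul_simple_self, mul_one,
    length_concat]
  exact Nat.lt_succ_of_le (cs.length_wordProd_le ω₀)

variable {β : W}

theorem exists_forall_length_le_length_mul (I : Set B) (w : W) :
    ∃ u ∈ cs.parabolicSubgroup I, ∀ v ∈ cs.parabolicSubgroup I, ℓ (w * u) ≤ ℓ (w * u * v) := by
  obtain ⟨u, hu, hmin⟩ := (InvImage.wf (fun u => ℓ (w * u)) wellFounded_lt).has_min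
    (cs.parabolicSubgroup I : Set W) ⟨1, one_mem _⟩
  refine ⟨u, hu, fun v hv => not_lt.mp fun h => hmin (u * v) (mul_mem hu hv) ?_⟩
  simpa [InvImage, mul_assoc] using h

/-- An exchange in a reduced word for `β * u` cannot delete a letter of `β`, by minimality of
`β` in its coset, nor one of `u`, since `u * s i` is longer than `u`. -/
theorem length_mul_mul_simple_of_forall_length_le
    (hβ : ∀ v ∈ cs.parabolicSubgroup I, ℓ β ≤ ℓ (β * v)) {u : W}
    (hu : u ∈ cs.parabolicSubgroup I) {i : B} (hi : i ∈ I) (h : ℓ (β * u) = ℓ β + ℓ u) :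
    ℓ (β * (u * s i)) = ℓ β + ℓ (u * s i) := by
  rw [← mul_assoc]
  rcases cs.length_mul_simple u i with hup | hdown
  · rcases cs.length_mul_simple (β * u) i with h' | h'
    · omega
    exfalso
    obtain ⟨α, hα, rfl⟩ := cs.exists_isReduced β
    obtain ⟨ι, hι, rfl⟩ := cs.exists_isReduced u
    rw [IsReduced] at hα hι
    rw [← wordProd_append] at h h'
    rcases cs.exists_eraseIdx_append_of_isRightDescent
      (by rw [IsRightDescent]; omega : cs.IsRightDescent (π (α ++ ι)) i) with
      ⟨j, hj, he⟩ | ⟨j, hj, he⟩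
    · have hv : π ι * s i * (π ι)⁻¹ ∈ cs.parabolicSubgroup I :=
        mul_mem (mul_mem hu (cs.simple_mem_parabolicSubgroup hi)) (inv_mem hu)
      have hβv := hβ _ hv
      rw [← mul_assoc, ← mul_assoc, ← wordProd_append, he, mul_inv_cancel_right] at hβv
      have := cs.length_wordProd_le (α.eraseIdx j)
      rw [length_eraseIdx_of_lt hj] at this
      omega
    · rw [wordProd_append, mul_assoc] at he
      have := cs.length_wordProd_le (ι.eraseIdx j)
      rw [length_eraseIdx_of_lt hj, ← mul_left_cancel he] at this
      omega
  · have := cs.length_mul_le β (u * s i)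
    rw [← mul_assoc] at this
    rcases cs.length_mul_simple (β * u) i with h' | h' <;> omega

theorem length_mul_of_forall_length_le (hβ : ∀ v ∈ cs.parabolicSubgroup I, ℓ β ≤ ℓ (β * v))
    {u : W} (hu : u ∈ cs.parabolicSubgroup I) : ℓ (β * u) = ℓ β + ℓ u := by
  induction hu using Subgroup.closure_induction_right with
  | one => simp
  | mul_right u hu _ hi ih =>
    obtain ⟨i, hi, rfl⟩ := hi
    exact cs.length_mul_mul_simple_of_forall_length_le hβ hu hi ih
  | mul_inv_cancel u hu _ hi ih =>
    obtain ⟨i, hi, rfl⟩ := hi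
    rw [inv_simple]
    exact cs.length_mul_mul_simple_of_forall_length_le hβ hu hi ih

theorem forall_length_le_length_mul_iff_mem_minCosetReps :
    (∀ v ∈ cs.parabolicSubgroup I, ℓ β ≤ ℓ (β * v)) ↔ β ∈ cs.minCosetReps I := by
  refine ⟨fun h i hi => (h _ (cs.simple_mem_parabolicSubgroup hi)).lt_of_ne
    (cs.length_mul_simple_ne β i).symm, fun hβ => ?_⟩
  obtain ⟨u, hu, hmin⟩ := cs.exists_forall_length_le_length_mul I β
  obtain rfl : u = 1 := by
    by_contra hu1
    obtain ⟨i, hi, hdesc⟩ := cs.exists_isRightDescent_of_mem_parabolicSubgroup (inv_mem hu)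
      (inv_ne_one.mpr hu1)
    have h₁ := cs.length_mul_of_forall_length_le hmin (inv_mem hu)
    have h₂ := cs.length_mul_of_forall_length_le hmin
      (mul_mem (inv_mem hu) (cs.simple_mem_parabolicSubgroup hi))
    rw [mul_inv_cancel_right] at h₁
    rw [← mul_assoc, mul_inv_cancel_right] at h₂
    have := hβ i hi
    rw [IsRightDescent] at hdesc
    omega
  simpa using hmin

theorem length_mul_of_mem_minCosetReps (hβ : β ∈ cs.minCosetReps I) {u : W}
    (hu : u ∈ cs.parabolicSubgroup I) : ℓ (β * u) = ℓ β + ℓ u :=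
  cs.length_mul_of_forall_length_le (cs.forall_length_le_length_mul_iff_mem_minCosetReps.mpr hβ) hu

theorem exists_mem_minCosetReps_mul_eq (I : Set B) (w : W) :
    ∃ β ∈ cs.minCosetReps I, ∃ u ∈ cs.parabolicSubgroup I, β * u = w := by
  obtain ⟨u, hu, hmin⟩ := cs.exists_forall_length_le_length_mul I w
  exact ⟨w * u, cs.forall_length_le_length_mul_iff_mem_minCosetReps.mp hmin, u⁻¹, inv_mem hu,
    mul_inv_cancel_right w u⟩

theorem eq_of_mem_minCosetReps_of_mul_eq {β' u u' : W} (hβ : β ∈ cs.minCosetReps I)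
    (hβ' : β' ∈ cs.minCosetReps I) (hu : u ∈ cs.parabolicSubgroup I)
    (hu' : u' ∈ cs.parabolicSubgroup I) (h : β * u = β' * u') : β = β' := by
  have hv : u * u'⁻¹ ∈ cs.parabolicSubgroup I := mul_mem hu (inv_mem hu')
  have hβ'_eq : β' = β * (u * u'⁻¹) := by rw [← mul_assoc, h, mul_inv_cancel_right]
  have h₁ := cs.length_mul_of_mem_minCosetReps hβ hv
  have h₂ := cs.length_mul_of_mem_minCosetReps hβ' (inv_mem hv)
  rw [hβ'_eq, mul_inv_cancel_right, length_inv] at h₂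
  have hv1 : u * u'⁻¹ = 1 := cs.length_eq_zero_iff.mp (by omega)
  rw [hβ'_eq, hv1, mul_one]

theorem parabolicSubgroup_mono {J : Set B} (hIJ : I ⊆ J) :
    cs.parabolicSubgroup I ≤ cs.parabolicSubgroup J :=
  Subgroup.closure_mono (Set.image_mono hIJ)

theorem bijOn_mul_minCosetReps {J : Set B} (hIJ : I ⊆ J) :
    Set.BijOn (fun p : W × W => p.2 * p.1)
      (cs.parabolicSubgroup I ×ˢ {β | β ∈ cs.parabolicSubgroup J ∧ β ∈ cs.minCosetReps I})
      (cs.parabolicSubgroup J) := by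
  have hIJ' := cs.parabolicSubgroup_mono hIJ
  refine ⟨fun p ⟨hu, hβ, _⟩ => mul_mem hβ (hIJ' hu), ?_, ?_⟩
  · rintro ⟨u, β⟩ ⟨hu, -, hβ⟩ ⟨u', β'⟩ ⟨hu', -, hβ'⟩ h
    obtain rfl := cs.eq_of_mem_minCosetReps_of_mul_eq hβ hβ' hu hu' h
    simpa using h
  · intro w hw
    obtain ⟨β, hβ, u, hu, rfl⟩ := cs.exists_mem_minCosetReps_mul_eq I w
    refine ⟨(u, β), ⟨hu, ?_, hβ⟩, rfl⟩
    simpa using mul_mem hw (inv_mem (hIJ' hu))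

theorem finsum_pow_length_mul_finsum_pow_length_minCosetReps {R : Type*} [CommSemiring R]
    (x : R) {J : Set B} (hIJ : I ⊆ J) (hJ : (cs.parabolicSubgroup J : Set W).Finite) :
    (∑ᶠ u ∈ (cs.parabolicSubgroup I : Set W), x ^ ℓ u) *
      (∑ᶠ β ∈ {β | β ∈ cs.parabolicSubgroup J ∧ β ∈ cs.minCosetReps I}, x ^ ℓ β) =
    ∑ᶠ w ∈ (cs.parabolicSubgroup J : Set W), x ^ ℓ w := by
  classical
  have hbij := cs.bijOn_mul_minCosetReps hIJ
  have hI := hJ.subset (cs.parabolicSubgroup_mono hIJ)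
  have hD : {β | β ∈ cs.parabolicSubgroup J ∧ β ∈ cs.minCosetReps I}.Finite :=
    hJ.subset fun _ => And.left
  rw [finsum_mem_eq_finite_toFinset_sum _ hI, finsum_mem_eq_finite_toFinset_sum _ hD,
    finsum_mem_eq_finite_toFinset_sum _ hJ, Finset.sum_mul_sum, ← Finset.sum_product']
  refine Finset.sum_nbij (fun p => p.2 * p.1) (fun p hp => ?_) ?_ ?_ fun p hp => ?_
  · simpa using hbij.mapsTo (by simpa using hp)
  · simpa using hbij.injOn
  · simpa using hbij.surjOn
  · simp only [Finset.mem_product, Set.Finite.mem_toFinset] at hp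
    rw [cs.length_mul_of_mem_minCosetReps hp.2.2 hp.1, pow_add, mul_comm]

end CoxeterSystem

theorem MonoidAlgebra.map_single_prod_map_neg_one_pow {B G R : Type*} [Monoid G] [Ring R]
    (φ : MonoidAlgebra ℤ G →+* R) (f : B → G) (x : R)
    (hφ : ∀ i, φ (MonoidAlgebra.single (f i) 1) = -x) (ω : List B) :
    φ (MonoidAlgebra.single (ω.map f).prod ((-1 : ℤ) ^ ω.length)) = x ^ ω.length := by
  induction ω with
  | nil => simp [← MonoidAlgebra.one_def]
  | cons i ω ih =>
    rw [List.map_cons, List.prod_cons, List.length_cons, pow_succ', pow_succ',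
      ← MonoidAlgebra.single_mul_single, map_mul, ih, MonoidAlgebra.single_neg, map_neg, hφ,
      neg_neg]

/-- Let `(W, S)` be a Coxeter system and `I ⊆ J ⊆ S` with `W_J` finite.  In the group algebra
`ℤ[G_W]` of the Artin group, let `T^J_I = Σ_{β ∈ W^J_I} (-1)^{ℓ(β)} g_β`, where
`W^J_I = {β ∈ W_J : ℓ(βs) > ℓ(β) ∀ s ∈ I}` is the set of minimal left coset representatives of
`W_I` in `W_J` and `g_β = ψ(β)` is the image of `β` under the canonical section `ψ` (sending a
reduced expression to the corresponding product of Artin generators).  Under any ring map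
`φ : ℤ[G_W] → ℤ[q, q⁻¹]` sending each `g_s` to `-q`, the element `T^J_I` maps to the quotient
`W_J(q) / W_I(q)` of Poincaré polynomials; equivalently `W_I(q) · φ(T^J_I) = W_J(q)`. -/
theorem T_maps_to_poincare_quotient {B W : Type*} [Group W] (M : CoxeterMatrix B)
    (cs : CoxeterSystem M W) (I J : Set B) (hIJ : I ⊆ J)
    (hfin : Finite (Subgroup.closure (cs.simple '' J) : Subgroup W))
    (ψ : W → ArtinGroup M)
    (hψ : ∀ (w : W) (l : List B), cs.wordProd l = w → cs.IsReduced l →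
      ψ w = (l.map (artinGen M)).prod)
    (φ : MonoidAlgebra ℤ (ArtinGroup M) →+* LaurentPolynomial ℤ)
    (hφ : ∀ s : B, φ (MonoidAlgebra.single (artinGen M s) 1) = -LaurentPolynomial.T 1) :
    (∑ᶠ w ∈ ((Subgroup.closure (cs.simple '' I) : Subgroup W) : Set W),
        (LaurentPolynomial.T 1 : LaurentPolynomial ℤ) ^ cs.length w) *
      φ (∑ᶠ β ∈ {β : W | β ∈ Subgroup.closure (cs.simple '' J) ∧
            ∀ s ∈ I, cs.length β < cs.length (β * cs.simple s)},
          MonoidAlgebra.single (ψ β) ((-1 : ℤ) ^ cs.length β)) =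
    ∑ᶠ w ∈ ((Subgroup.closure (cs.simple '' J) : Subgroup W) : Set W),
      (LaurentPolynomial.T 1 : LaurentPolynomial ℤ) ^ cs.length w := by
  have hJ : (cs.parabolicSubgroup J : Set W).Finite := Set.finite_coe_iff.mp hfin
  have hφψ (β : W) : φ (MonoidAlgebra.single (ψ β) ((-1 : ℤ) ^ cs.length β)) =
      LaurentPolynomial.T 1 ^ cs.length β := by
    obtain ⟨ω, hω, rfl⟩ := cs.exists_isReduced β
    rw [hψ _ ω rfl hω, hω]
    exact MonoidAlgebra.map_single_prod_map_neg_one_pow φ (artinGen M) _ hφ ω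
  have hD : {β | β ∈ cs.parabolicSubgroup J ∧ β ∈ cs.minCosetReps I}.Finite :=
    hJ.subset fun _ => And.left
  have hmap := φ.toAddMonoidHom.map_finsum_mem
    (fun β => MonoidAlgebra.single (ψ β) ((-1 : ℤ) ^ cs.length β)) hD
  simp only [RingHom.toAddMonoidHom_eq_coe, AddMonoidHom.coe_coe, hφψ] at hmap
  exact (congrArg (_ * ·) hmap).trans
    (cs.finsum_pow_length_mul_finsum_pow_length_minCosetReps _ hIJ hJ)
end

section
/- For a Coxeter system (W,S) and the chain complex C_* of free ℤ[G_W]-modules with C_k = ⊕_{J⊆S, |J|=k, W_J finite} ℤ[G_W]·e_J and boundary ∂e_J = Σ_{I⊂J, |I|=k−1} [I:J] T^J_I e_I, specialize via g_s ↦ −q to get the complex over ℤ[q,q^{−1}] with boundary ∂e_J = Σ_{I⊂J,|I|=|J|−1} [I:J] (W_J(q)/W_I(q)) e_I. Prove that for the braid case A_2 (S = {s,t}, m(s,t)=3), this specialized complex has H² equal to ℤ[q,q^{−1}]/(q²−q+1) ≅ ℤ[q]/(q²−q+1). -/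
/-! The image of `δ¹` is the ideal generated by `[3] = 1 + q + q²`, and the automorphism `q ↦ -q`
of `ℤ[q, q⁻¹]` carries it to `(q² - q + 1)`. Inverting `q` in `ℤ[q]/(q² - q + 1)` changes nothing,
because `q (1 - q) ≡ 1` there, so this quotient is also the Laurent one. -/

open LaurentPolynomial

/-- `[3] = 1 + q + q²` in `ℤ[q, q⁻¹]`, the quotient `W_{{s,t}}(q) / W_{{s}}(q)` of Poincaré
polynomials for the Coxeter system of type `A₂`. -/
noncomputable def qThree : LaurentPolynomial ℤ := 1 + T 1 + T 2

/-- The top boundary of the specialized complex of type `A₂` (`S = {s, t}`, `m(s,t) = 3`),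
dualized:  `δ¹ : C^1 = R·e_{{s}} ⊕ R·e_{{t}} → C^2 = R·e_{{s,t}}`,
`(a, b) ↦ [3]·a − [3]·b`, over `R = ℤ[q, q⁻¹]`. -/
noncomputable def deltaOne :
    (LaurentPolynomial ℤ × LaurentPolynomial ℤ) →ₗ[LaurentPolynomial ℤ] LaurentPolynomial ℤ :=
  qThree • (LinearMap.fst (LaurentPolynomial ℤ) (LaurentPolynomial ℤ) (LaurentPolynomial ℤ) -
    LinearMap.snd (LaurentPolynomial ℤ) (LaurentPolynomial ℤ) (LaurentPolynomial ℤ))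


open Polynomial

namespace LaurentPolynomial

theorem ringHom_ext {R S : Type*} [CommSemiring R] [CommSemiring S] {f g : R[T;T⁻¹] →+* S}
    (hC : ∀ a, f (C a) = g (C a)) (hT : f (T 1) = g (T 1)) : f = g :=
  IsLocalization.ringHom_ext (Submonoid.powers (X : R[X])) <|
    Polynomial.ringHom_ext (fun a => by simpa using hC a) (by simpa using hT)

variable {R : Type*} [CommRing R]

noncomputable def negT : R[T;T⁻¹] →+* R[T;T⁻¹] := eval₂ C (-(isUnit_T (R := R) 1).unit)

@[simp] theorem negT_C (a : R) : negT (C a) = C a := eval₂_C _ _ _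

@[simp] theorem negT_T_one : negT (T 1 : R[T;T⁻¹]) = -T 1 := by simp [negT]

theorem negT_negT (f : R[T;T⁻¹]) : negT (negT f) = f := by
  have : negT.comp negT = RingHom.id R[T;T⁻¹] := ringHom_ext (by simp) (by simp)
  exact RingHom.congr_fun this f

noncomputable def negTEquiv : R[T;T⁻¹] ≃+* R[T;T⁻¹] :=
  RingEquiv.ofRingHom negT negT (RingHom.ext negT_negT) (RingHom.ext negT_negT)

end LaurentPolynomial

/-- Localizing `R[X] ⧸ (p)` at `X` gives the Laurent quotient; when `X` is already a unit
there, the localization map is an isomorphism. -/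
noncomputable def Polynomial.quotientSpanEquivLaurent {R : Type*} [CommRing R] (p : R[X])
    (hX : IsUnit (Ideal.Quotient.mk (Ideal.span {p}) X)) :
    R[X] ⧸ Ideal.span {p} ≃+* R[T;T⁻¹] ⧸ Ideal.span {toLaurent p} :=
  (IsLocalization.atUnits (R[X] ⧸ Ideal.span {p})
    (Algebra.algebraMapSubmonoid _ (Submonoid.powers (X : R[X])))
    (S := R[T;T⁻¹] ⧸ (Ideal.span {p}).map (algebraMap R[X] R[T;T⁻¹])) (by
      rintro _ ⟨_, ⟨n, rfl⟩, rfl⟩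
      simpa [IsUnit.mem_submonoid_iff] using hX.pow n)).toRingEquiv.trans
  (Ideal.quotEquivOfEq (by rw [Ideal.map_span, Set.image_singleton, algebraMap_eq_toLaurent]))

theorem LinearMap.range_smul_fst_sub_snd {R : Type*} [CommRing R] (c : R) :
    LinearMap.range (c • (LinearMap.fst R R R - LinearMap.snd R R R)) = Ideal.span {c} := by
  ext x
  simp only [LinearMap.mem_range, Ideal.mem_span_singleton', Prod.exists, LinearMap.smul_apply,
    LinearMap.sub_apply, LinearMap.fst_apply, LinearMap.snd_apply, smul_eq_mul]
  constructor
  · rintro ⟨a, b, rfl⟩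
    exact ⟨a - b, mul_comm _ _⟩
  · rintro ⟨a, rfl⟩
    exact ⟨a, 0, by rw [sub_zero, mul_comm]⟩

theorem range_deltaOne :
    (LinearMap.range deltaOne : Ideal (LaurentPolynomial ℤ)) = Ideal.span {qThree} :=
  LinearMap.range_smul_fst_sub_snd qThree

theorem negT_qThree : negT qThree = T 2 - T 1 + 1 := by
  have hT2 : (T 2 : ℤ[T;T⁻¹]) = T 1 ^ 2 := by rw [T_pow]; norm_num
  rw [qThree, hT2]
  simp only [map_add, map_one, map_pow, negT_T_one]
  ring

theorem isUnit_mk_X : IsUnit (Ideal.Quotient.mk (Ideal.span {(X : ℤ[X]) ^ 2 - X + 1}) X) := by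
  refine .of_mul_eq_one (Ideal.Quotient.mk _ (1 - X)) ?_
  rw [← map_mul, ← map_one (Ideal.Quotient.mk _), Ideal.Quotient.eq, Ideal.mem_span_singleton]
  exact ⟨-1, by ring⟩

/-- For the braid case `A₂` (`S = {s, t}`, `m(s,t) = 3`), the complex of free
`ℤ[q, q⁻¹]`-modules obtained from the Artin complex by the specialization `g_s ↦ -q`, with
boundary `∂e_J = Σ [I:J] (W_J(q)/W_I(q)) e_I`, has top cohomology
`H² = coker(δ¹) = ℤ[q, q⁻¹]/(q² − q + 1) ≅ ℤ[q]/(q² − q + 1)`. -/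
theorem top_cohomology_A2 :
    Nonempty ((LaurentPolynomial ℤ ⧸ (LinearMap.range deltaOne : Ideal (LaurentPolynomial ℤ))) ≃+*
        (LaurentPolynomial ℤ ⧸ Ideal.span ({T 2 - T 1 + 1} : Set (LaurentPolynomial ℤ)))) ∧
    Nonempty ((LaurentPolynomial ℤ ⧸ Ideal.span ({T 2 - T 1 + 1} : Set (LaurentPolynomial ℤ))) ≃+*
        (Polynomial ℤ ⧸ Ideal.span
          ({Polynomial.X ^ 2 - Polynomial.X + 1} : Set (Polynomial ℤ)))) := by
  have hLaurent : toLaurent ((X : ℤ[X]) ^ 2 - X + 1) = T 2 - T 1 + 1 := by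
    simp [Polynomial.toLaurent_X_pow]
  refine ⟨⟨Ideal.quotientEquiv _ _ negTEquiv ?_⟩, ⟨?_⟩⟩
  · rw [range_deltaOne, Ideal.map_span, Set.image_singleton]
    exact congrArg (fun a => Ideal.span {a}) negT_qThree.symm
  · rw [← hLaurent]
    exact (quotientSpanEquivLaurent _ isUnit_mk_X).symm
end
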